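/- Assume α_{n+1} ≤ ρ αₙ/2 for every n. If (wₙ) does not tend to 0 and x ∈ D, then T_w is not differentiable at x. -/

import Mathlib

open Filter Topology

/-- The (viscosity/Fréchet) subdifferential of `f : ℝ → ℝ`, relative to the domain `s`,
at the point `x`: the set of `c` with
`liminf_{h → 0, x + h ∈ s} (f (x + h) - f x - c * h) / |h| ≥ 0`. -/
def subdifferentialWithin (f : ℝ → ℝ) (s : Set ℝ) (x : ℝ) : Set ℝ :=
  {c | ∀ ε > (0 : ℝ), ∀ᶠ h in 𝓝[≠] (0 : ℝ), x + h ∈ s → -ε ≤ (f (x + h) - f x - c * h) / |h|}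

/-- The superdifferential `∂⁺f(x) = -∂(-f)(x)`. -/
def superdifferentialWithin (f : ℝ → ℝ) (s : Set ℝ) (x : ℝ) : Set ℝ :=
  {c | -c ∈ subdifferentialWithin (fun y => -f y) s x}

/-- The set of midpoints of the connected components of the complement of `s` (the
bounded components being the open intervals between consecutive points of `s`). -/
def midpoints (s : Set ℝ) : Set ℝ :=
  {m | ∃ a ∈ s, ∃ b ∈ s, a < b ∧ Set.Ioo a b ∩ s = ∅ ∧ m = (a + b) / 2}

lemma infDist_eq_of_fin {s : Set ℝ} (hfin : s.Finite) {y v : ℝ}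
    (h1 : ∃ p ∈ s, dist y p = v) (h2 : ∀ p ∈ s, v ≤ dist y p) :
    Metric.infDist y s = v := by
  obtain ⟨p, hp, hpv⟩ := h1
  refine le_antisymm (hpv ▸ Metric.infDist_le_dist_of_mem hp) ?_
  obtain ⟨q, hq, hqd⟩ := hfin.isCompact.exists_infDist_eq_dist ⟨p, hp⟩ y
  rw [hqd]; exact h2 q hq

lemma exists_next {s : Set ℝ} (hfin : s.Finite) {x : ℝ} (h : ∃ p ∈ s, x < p) :
    ∃ b ∈ s, x < b ∧ ∀ p ∈ s, x < p → b ≤ p := by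
  obtain ⟨b, hb, hmin⟩ := Set.exists_min_image (s ∩ Set.Ioi x) id
    (hfin.subset Set.inter_subset_left) (by obtain ⟨p, hp, hxp⟩ := h; exact ⟨p, hp, hxp⟩)
  exact ⟨b, hb.1, hb.2, fun p hp hxp => hmin p ⟨hp, hxp⟩⟩

lemma exists_prev {s : Set ℝ} (hfin : s.Finite) {x : ℝ} (h : ∃ p ∈ s, p ≤ x) :
    ∃ a ∈ s, a ≤ x ∧ ∀ p ∈ s, p ≤ x → p ≤ a := by
  obtain ⟨a, ha, hmax⟩ := Set.exists_max_image (s ∩ Set.Iic x) id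
    (hfin.subset Set.inter_subset_left) (by obtain ⟨p, hp, hxp⟩ := h; exact ⟨p, hp, hxp⟩)
  exact ⟨a, ha.1, ha.2, fun p hp hxp => hmax p ⟨hp, hxp⟩⟩

lemma infDist_linear_right {s : Set ℝ} (hfin : s.Finite) (hne : s.Nonempty) (x : ℝ) :
    ∃ δ > 0, ∃ sl : ℝ, ∀ t : ℝ, 0 < t → t < δ →
      Metric.infDist (x + t) s = Metric.infDist x s + sl * t := by
  by_cases hP : ∃ p ∈ s, x < p
  · obtain ⟨b, hbs, hxb, hbmin⟩ := exists_next hfin hP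
    by_cases hQ : ∃ p ∈ s, p ≤ x
    · obtain ⟨a, has, hax, hamax⟩ := exists_prev hfin hQ
      set A := x - a with hA
      set B := b - x with hB
      have hA0 : 0 ≤ A := by simp [hA]; linarith
      have hB0 : 0 < B := by simp [hB]; linarith
      rcases lt_or_ge A B with hAB | hAB
      · -- slope 1, δ = (B-A)/2
        have hbase : Metric.infDist x s = A := by
          refine infDist_eq_of_fin hfin ⟨a, has, ?_⟩ ?_
          · rw [Real.dist_eq, abs_of_nonneg (by linarith)]
          · intro p hp
            rcases le_or_gt p x with h | h
            · have := hamax p hp h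
              rw [Real.dist_eq]; exact le_abs.2 (Or.inl (by linarith))
            · have := hbmin p hp h
              rw [Real.dist_eq]; exact le_abs.2 (Or.inr (by linarith))
        refine ⟨(B - A) / 2, by linarith, 1, fun t ht htδ => ?_⟩
        rw [hbase, one_mul]
        refine infDist_eq_of_fin hfin ⟨a, has, ?_⟩ ?_
        · rw [Real.dist_eq, abs_of_nonneg (by linarith)]; ring
        · intro p hp
          rcases le_or_gt p x with h | h
          · have := hamax p hp h
            rw [Real.dist_eq]; exact le_abs.2 (Or.inl (by linarith))
          · have := hbmin p hp h
            rw [Real.dist_eq]; exact le_abs.2 (Or.inr (by linarith))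
      · -- slope -1, δ = B
        have hbase : Metric.infDist x s = B := by
          refine infDist_eq_of_fin hfin ⟨b, hbs, ?_⟩ ?_
          · rw [Real.dist_eq, abs_of_nonpos (by linarith)]; ring
          · intro p hp
            rcases le_or_gt p x with h | h
            · have := hamax p hp h
              rw [Real.dist_eq]; exact le_abs.2 (Or.inl (by linarith))
            · have := hbmin p hp h
              rw [Real.dist_eq]; exact le_abs.2 (Or.inr (by linarith))
        refine ⟨B, hB0, -1, fun t ht htδ => ?_⟩
        rw [hbase]
        refine infDist_eq_of_fin hfin ⟨b, hbs, ?_⟩ ?_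
        · rw [Real.dist_eq, abs_of_nonpos (by linarith)]; ring
        · intro p hp
          rcases le_or_gt p x with h | h
          · have := hamax p hp h
            rw [Real.dist_eq]; exact le_abs.2 (Or.inl (by linarith))
          · have := hbmin p hp h
            rw [Real.dist_eq]; exact le_abs.2 (Or.inr (by linarith))
    · -- all points > x : slope -1, δ = b - x
      push_neg at hQ
      have hbase : Metric.infDist x s = b - x := by
        refine infDist_eq_of_fin hfin ⟨b, hbs, ?_⟩ ?_
        · rw [Real.dist_eq, abs_of_nonpos (by linarith)]; ring
        · intro p hp
          have h1 := hQ p hp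
          have := hbmin p hp h1
          rw [Real.dist_eq]; exact le_abs.2 (Or.inr (by linarith))
      refine ⟨b - x, by linarith, -1, fun t ht htδ => ?_⟩
      rw [hbase]
      refine infDist_eq_of_fin hfin ⟨b, hbs, ?_⟩ ?_
      · rw [Real.dist_eq, abs_of_nonpos (by linarith)]; ring
      · intro p hp
        have h1 := hQ p hp
        have := hbmin p hp h1
        rw [Real.dist_eq]; exact le_abs.2 (Or.inr (by linarith))
  · -- all points ≤ x : slope 1
    push_neg at hP
    obtain ⟨q, hq⟩ := hne
    obtain ⟨a, has, hax, hamax⟩ := exists_prev hfin ⟨q, hq, hP q hq⟩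
    have hbase : Metric.infDist x s = x - a := by
      refine infDist_eq_of_fin hfin ⟨a, has, ?_⟩ ?_
      · rw [Real.dist_eq, abs_of_nonneg (by linarith)]
      · intro p hp
        have := hamax p hp (hP p hp)
        rw [Real.dist_eq]; exact le_abs.2 (Or.inl (by linarith))
    refine ⟨1, one_pos, 1, fun t ht htδ => ?_⟩
    rw [hbase, one_mul]
    refine infDist_eq_of_fin hfin ⟨a, has, ?_⟩ ?_
    · rw [Real.dist_eq, abs_of_nonneg (by linarith)]; ring
    · intro p hp
      have h1 := hP p hp
      have := hamax p hp h1
      rw [Real.dist_eq]; exact le_abs.2 (Or.inl (by linarith))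

lemma taux (D : ℕ → Set ℝ) (α : ℕ → ℝ) (ρ : ℝ) (w : ℕ → ℝ)
    (hD0 : ∀ n, (0 : ℝ) ∈ D n) (hD1 : ∀ n, (1 : ℝ) ∈ D n)
    (hDsub : ∀ n, D n ⊆ Set.Icc 0 1)
    (hDfin : ∀ n, (D n).Finite)
    (hsub : ∀ a b, a ≤ b → D a ⊆ D b)
    (hρ : ρ ∈ Set.Ioc (0 : ℝ) 1)
    (hα : Summable α)
    (hgapU : ∀ n, ∀ a ∈ D n, ∀ b ∈ D n, a < b → Set.Ioo a b ∩ D n = ∅ → b - a ≤ α n)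
    (hgapL : ∀ n, ∀ a ∈ D n, ∀ b ∈ D n, a < b → ρ * α n ≤ b - a)
    (hwα : Summable (fun n => |w n * α n|))
    (hα2 : ∀ n, α (n + 1) ≤ ρ * α n / 2) (hwc0 : ¬ Tendsto w atTop (𝓝 0))
    (x : ℝ) (m : ℕ) (hxm : x ∈ D m) (hxlt : x < 1) :
    ¬ DifferentiableWithinAt ℝ (fun z => ∑' n : ℕ, w n * Metric.infDist z (D n))
        (Set.Icc 0 1) x := by
  intro hdiff
  obtain ⟨hρ0, hρ1⟩ := hρ
  have hαpos : ∀ n, 0 < α n := by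
    intro n
    obtain ⟨b, hbs, hb0, hbmin⟩ := exists_next (hDfin n) ⟨1, hD1 n, one_pos⟩
    have hioo : Set.Ioo 0 b ∩ D n = ∅ := by
      ext p; simp only [Set.mem_inter_iff, Set.mem_Ioo, Set.mem_empty_iff_false, iff_false]
      rintro ⟨⟨h1, h2⟩, h3⟩
      exact absurd (hbmin p h3 h1) (not_le.2 h2)
    have := hgapU n 0 (hD0 n) b hbs hb0 hioo
    linarith
  have hch : ∀ n N, n < N → 2 * α N ≤ ρ * α n := by
    intro n N
    induction N with
    | zero => omega
    | succ N ih =>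
      intro h
      rcases Nat.lt_succ_iff_lt_or_eq.1 h with h' | h'
      · have h1 := ih h'
        have h2 := hα2 N
        have h3 := hαpos N
        nlinarith [hαpos n]
      · subst h'
        have := hα2 n
        linarith
  have hgb : ∀ n, ∀ z ∈ Set.Icc (0:ℝ) 1, Metric.infDist z (D n) ≤ α n := by
    intro n z hz
    by_cases hzD : z ∈ D n
    · rw [Metric.infDist_zero_of_mem hzD]; exact (hαpos n).le
    · have hz1 : z < 1 := lt_of_le_of_ne hz.2 (fun h => hzD (h ▸ hD1 n))
      obtain ⟨a, has, haz, hamax⟩ := exists_prev (hDfin n) ⟨0, hD0 n, hz.1⟩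
      obtain ⟨b, hbs, hzb, hbmin⟩ := exists_next (hDfin n) ⟨1, hD1 n, hz1⟩
      have haz' : a < z := lt_of_le_of_ne haz (fun h => hzD (h ▸ has))
      have hioo : Set.Ioo a b ∩ D n = ∅ := by
        ext p; simp only [Set.mem_inter_iff, Set.mem_Ioo, Set.mem_empty_iff_false, iff_false]
        rintro ⟨⟨h1, h2⟩, h3⟩
        rcases le_or_gt p z with h | h
        · exact absurd (hamax p h3 h) (not_le.2 h1)
        · exact absurd (hbmin p h3 h) (not_le.2 h2)
      have := hgapU n a has b hbs (haz'.trans hzb) hioo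
      calc Metric.infDist z (D n) ≤ dist z a := Metric.infDist_le_dist_of_mem has
        _ = z - a := by rw [Real.dist_eq, abs_of_nonneg (by linarith)]
        _ ≤ α n := by linarith
  have hsummz : ∀ z ∈ Set.Icc (0:ℝ) 1, Summable (fun n => w n * Metric.infDist z (D n)) := by
    intro z hz
    apply summable_abs_iff.mp
    apply Summable.of_nonneg_of_le (fun n => abs_nonneg _) _ hwα
    intro n
    rw [abs_mul, abs_mul, abs_of_nonneg Metric.infDist_nonneg, abs_of_nonneg (hαpos n).le]
    exact mul_le_mul_of_nonneg_left (hgb n z hz) (abs_nonneg _)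
  have hxI : x ∈ Set.Icc (0:ℝ) 1 := hDsub m hxm
  have hex : ∀ N, ∃ b ∈ D N, x < b ∧ ∀ p ∈ D N, x < p → b ≤ p :=
    fun N => exists_next (hDfin N) ⟨1, hD1 N, hxlt⟩
  choose y hyD hxy hymin using hex
  have hyx : ∀ N, m ≤ N → y N - x ≤ α N := by
    intro N hmN
    have hxDN : x ∈ D N := hsub m N hmN hxm
    have hioo : Set.Ioo x (y N) ∩ D N = ∅ := by
      ext p; simp only [Set.mem_inter_iff, Set.mem_Ioo, Set.mem_empty_iff_false, iff_false]
      rintro ⟨⟨h1, h2⟩, h3⟩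
      exact absurd (hymin N p h3 h1) (not_le.2 h2)
    exact hgapU N x hxDN (y N) (hyD N) (hxy N) hioo
  have hαto : Tendsto α atTop (𝓝 0) := hα.tendsto_atTop_zero
  have hyto : Tendsto y atTop (𝓝 x) := by
    have h0 : Tendsto (fun N => y N - x) atTop (𝓝 0) :=
      squeeze_zero' (Eventually.of_forall (fun N => (sub_pos.2 (hxy N)).le))
        ((eventually_ge_atTop m).mono hyx) hαto
    have := h0.add_const x
    simpa using this
  have hval : ∀ N n, m ≤ n → n < N → Metric.infDist (y N) (D n) = y N - x := by
    intro N n hmn hnN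
    have hxDn : x ∈ D n := hsub m n hmn hxm
    refine infDist_eq_of_fin (hDfin n) ⟨x, hxDn, ?_⟩ ?_
    · rw [Real.dist_eq, abs_of_nonneg (by have := hxy N; linarith)]
    · intro p hp
      rcases le_or_gt p x with h | h
      · rw [Real.dist_eq]; exact le_abs.2 (Or.inl (by have := hxy N; linarith))
      · have h1 := hgapL n x hxDn p hp h
        have h2 := hch n N hnN
        have h3 := hyx N (hmn.trans hnN.le)
        rw [Real.dist_eq]; exact le_abs.2 (Or.inr (by linarith))
  have hlin := fun n => infDist_linear_right (hDfin n) ⟨0, hD0 n⟩ x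
  choose δ hδpos sl hsl using hlin
  set T := fun z => ∑' n : ℕ, w n * Metric.infDist z (D n) with hT
  set S := ∑ n ∈ Finset.range m, w n * sl n with hS
  set W := fun N => ∑ n ∈ Finset.Ico m N, w n with hW
  have hslope : ∀ᶠ N in atTop, slope T x (y N) = S + W N := by
    have h1 : ∀ᶠ N in atTop, ∀ n ∈ Finset.range m, y N - x < δ n := by
      rw [eventually_all_finset]
      intro n _
      have h2 : ∀ᶠ N in atTop, α N < δ n := hαto.eventually_lt_const (hδpos n)
      filter_upwards [h2, eventually_ge_atTop m] with N hN hmN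
      exact lt_of_le_of_lt (hyx N hmN) hN
    filter_upwards [h1, eventually_ge_atTop m] with N hδN hmN
    have hyI : y N ∈ Set.Icc (0:ℝ) 1 := hDsub N (hyD N)
    have hsub1 : T (y N) - T x
        = ∑' n, (w n * Metric.infDist (y N) (D n) - w n * Metric.infDist x (D n)) :=
      (Summable.tsum_sub (hsummz _ hyI) (hsummz _ hxI)).symm
    have hsum2 : (∑' n, (w n * Metric.infDist (y N) (D n) - w n * Metric.infDist x (D n)))
        = ∑ n ∈ Finset.range N,
            (w n * Metric.infDist (y N) (D n) - w n * Metric.infDist x (D n)) := by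
      apply tsum_eq_sum
      intro n hn
      rw [Finset.mem_range, not_lt] at hn
      rw [Metric.infDist_zero_of_mem (hsub N n hn (hyD N)),
        Metric.infDist_zero_of_mem (hsub m n (hmN.trans hn) hxm)]
      ring
    have hsplit : ∑ n ∈ Finset.range N,
          (w n * Metric.infDist (y N) (D n) - w n * Metric.infDist x (D n))
        = (S + W N) * (y N - x) := by
      rw [← Finset.sum_range_add_sum_Ico _ hmN]
      have e1 : ∑ n ∈ Finset.range m,
            (w n * Metric.infDist (y N) (D n) - w n * Metric.infDist x (D n))
          = S * (y N - x) := by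
        rw [hS, Finset.sum_mul]
        apply Finset.sum_congr rfl
        intro n hn
        have hlt := hδN n hn
        have h3 := hsl n (y N - x) (sub_pos.2 (hxy N)) hlt
        have h4 : x + (y N - x) = y N := by ring
        rw [h4] at h3
        rw [h3]; ring
      have e2 : ∑ n ∈ Finset.Ico m N,
            (w n * Metric.infDist (y N) (D n) - w n * Metric.infDist x (D n))
          = W N * (y N - x) := by
        rw [hW, Finset.sum_mul]
        apply Finset.sum_congr rfl
        intro n hn
        rw [Finset.mem_Ico] at hn
        rw [hval N n hn.1 hn.2, Metric.infDist_zero_of_mem (hsub m n hn.1 hxm)]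
        ring
      rw [e1, e2]; ring
    have hne : y N - x ≠ 0 := ne_of_gt (sub_pos.2 (hxy N))
    rw [slope_def_field, hsub1, hsum2, hsplit, mul_div_assoc, div_self hne, mul_one]
  set c := derivWithin T (Set.Icc (0:ℝ) 1) x with hc
  have hderiv : HasDerivWithinAt T c (Set.Icc 0 1) x := hdiff.hasDerivWithinAt
  rw [hasDerivWithinAt_iff_tendsto_slope] at hderiv
  have hymem : ∀ N, y N ∈ Set.Icc (0:ℝ) 1 \ {x} :=
    fun N => ⟨hDsub N (hyD N), by simp [(hxy N).ne']⟩
  have hyto' : Tendsto y atTop (𝓝[Set.Icc (0:ℝ) 1 \ {x}] x) :=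
    tendsto_nhdsWithin_of_tendsto_nhds_of_eventually_within _ hyto
      (Eventually.of_forall hymem)
  have hQc : Tendsto (fun N => slope T x (y N)) atTop (𝓝 c) := hderiv.comp hyto'
  have hQc2 : Tendsto (fun N => S + W N) atTop (𝓝 c) := Tendsto.congr' hslope hQc
  have hw0 : Tendsto w atTop (𝓝 0) := by
    have h1 : Tendsto (fun N => (S + W (N + 1)) - (S + W N)) atTop (𝓝 (c - c)) :=
      (hQc2.comp (tendsto_add_atTop_nat 1)).sub hQc2
    rw [sub_self] at h1
    apply Tendsto.congr' _ h1
    filter_upwards [eventually_ge_atTop m] with N hmN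
    simp only [hW]
    rw [Finset.sum_Ico_succ_top hmN]
    ring
  exact hwc0 hw0

theorem stmt11
(D : ℕ → Set ℝ) (α : ℕ → ℝ) (ρ : ℝ) (w : ℕ → ℝ)
    (hD0 : (0 : ℝ) ∈ D 0) (hD1 : (1 : ℝ) ∈ D 0)
    (hDsub : ∀ n, D n ⊆ Set.Icc 0 1)
    (hDfin : ∀ n, (D n).Finite)
    (hDmono : ∀ n, D n ⊆ D (n + 1))
    (hρ : ρ ∈ Set.Ioc (0 : ℝ) 1)
    (hα : Summable α)
    (hgapU : ∀ n, ∀ a ∈ D n, ∀ b ∈ D n, a < b → Set.Ioo a b ∩ D n = ∅ → b - a ≤ α n)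
    (hgapL : ∀ n, ∀ a ∈ D n, ∀ b ∈ D n, a < b → ρ * α n ≤ b - a)
    (hwα : Summable (fun n => |w n * α n|))
    (hα2 : ∀ n, α (n + 1) ≤ ρ * α n / 2) (hwc0 : ¬ Tendsto w atTop (𝓝 0))
    (x : ℝ) (hx : x ∈ ⋃ n, D n) :
    ¬ DifferentiableWithinAt ℝ (fun z => ∑' n : ℕ, w n * Metric.infDist z (D n))
        (Set.Icc 0 1) x := by
  have hsub : ∀ a b : ℕ, a ≤ b → D a ⊆ D b := by
    intro a b h
    induction b, h using Nat.le_induction with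
    | base => exact subset_rfl
    | succ b hb ih => exact ih.trans (hDmono b)
  have hD0' : ∀ n, (0:ℝ) ∈ D n := fun n => hsub 0 n (Nat.zero_le n) hD0
  have hD1' : ∀ n, (1:ℝ) ∈ D n := fun n => hsub 0 n (Nat.zero_le n) hD1
  obtain ⟨m, hxm⟩ := Set.mem_iUnion.1 hx
  rcases lt_or_eq_of_le (hDsub m hxm).2 with hlt | heq
  · exact taux D α ρ w hD0' hD1' hDsub hDfin hsub hρ hα hgapU hgapL hwα hα2 hwc0 x m hxm hlt
  · intro hdiff
    set r : ℝ → ℝ := fun z => 1 - z with hr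
    have hrr : ∀ z : ℝ, r (r z) = z := fun z => by simp [hr]
    have hiso : Isometry r := Isometry.of_dist_eq (fun a b => by
      simp only [hr, Real.dist_eq]
      rw [abs_sub_comm]
      congr 1
      ring)
    have hinf : ∀ (s : Set ℝ) (z : ℝ), Metric.infDist z (r '' s) = Metric.infDist (r z) s := by
      intro s z
      conv_lhs => rw [← hrr z]
      exact Metric.infDist_image hiso
    have hnd := taux (fun n => r '' D n) α ρ w
      (fun n => ⟨1, hD1' n, by simp [hr]⟩)
      (fun n => ⟨0, hD0' n, by simp [hr]⟩)
      (by rintro n z ⟨p, hp, rfl⟩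
          obtain ⟨h1, h2⟩ := hDsub n hp
          exact ⟨by simp only [hr]; linarith, by simp only [hr]; linarith⟩)
      (fun n => (hDfin n).image r)
      (fun a b h => Set.image_mono (hsub a b h))
      hρ hα
      (by rintro n a ⟨a0, ha0, rfl⟩ b ⟨b0, hb0, rfl⟩ hab hioo
          have hba : b0 < a0 := by simp only [hr] at hab; linarith
          have hioo' : Set.Ioo b0 a0 ∩ D n = ∅ := by
            ext p
            simp only [Set.mem_inter_iff, Set.mem_Ioo, Set.mem_empty_iff_false, iff_false]
            rintro ⟨⟨h1, h2⟩, h3⟩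
            have hmem : r p ∈ Set.Ioo (r a0) (r b0) ∩ (r '' D n) :=
              ⟨⟨by simp only [hr]; linarith, by simp only [hr]; linarith⟩, ⟨p, h3, rfl⟩⟩
            rw [hioo] at hmem
            exact hmem
          have := hgapU n b0 hb0 a0 ha0 hba hioo'
          simp only [hr]
          linarith)
      (by rintro n a ⟨a0, ha0, rfl⟩ b ⟨b0, hb0, rfl⟩ hab
          have hba : b0 < a0 := by simp only [hr] at hab; linarith
          have := hgapL n b0 hb0 a0 ha0 hba
          simp only [hr]
          linarith)
      hwα hα2 hwc0 (1 - x) m ⟨x, hxm, rfl⟩ (by rw [heq]; norm_num)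
    apply hnd
    have hcomp : DifferentiableWithinAt ℝ
        ((fun z => ∑' n : ℕ, w n * Metric.infDist z (D n)) ∘ r) (Set.Icc 0 1) (1 - x) := by
      apply DifferentiableWithinAt.comp (t := Set.Icc (0:ℝ) 1)
      · have hx' : r (1 - x) = x := by simp [hr]
        rw [hx']
        exact hdiff
      · exact (((differentiable_const (1:ℝ)).sub differentiable_id).differentiableAt).differentiableWithinAt
      · intro z hz
        obtain ⟨h1, h2⟩ := hz
        exact ⟨by simp only [hr]; linarith, by simp only [hr]; linarith⟩
    have heqfun : (fun z => ∑' n : ℕ, w n * Metric.infDist z ((fun k => r '' D k) n))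
        = (fun z => ∑' n : ℕ, w n * Metric.infDist z (D n)) ∘ r := by
      funext z
      simp only [Function.comp]
      exact tsum_congr (fun n => by rw [hinf])
    rw [heqfun]
    exact hcomp
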